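/- Let κ* > 1 and define Ψ on (0,1) by (d/du) ln Ψ(u) = 1/(u(κ* Q(u) - 1)), where Q(u) = 3(1-(1-u)^{1/3})/u. Then with p = 1/(κ*-1), Ψ(u) = α(u) u^p where α extends to a function on [0,1) that is decreasing and continuous at 0 with α(0) > 0. In particular Ψ(u)/u^p tends to a positive limit as u → 0⁺. -/

import Mathlib

/-!
Put `h u = log Ψ(u) - p log u`, so that `Ψ(u) = exp (h u) · u^p`. Since `p = 1/(κ-1)`,
`h' = 1/(u(κQ-1)) - 1/((κ-1)u) = -(κ/(κ-1)) · ((Q-1)/u) / (κQ-1)`. Writing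
`a = (1-u)^{1/3}` gives `Q = 3/(1+a+a²)`, from which `1 ≤ Q ≤ 1 + 2u`; hence
`-2κ/(κ-1)² ≤ h' ≤ 0`. So `h` is antitone and bounded above on `(0,1)`, it has a finite limit
`L` at `0⁺`, and `α = exp ∘ h`, extended by `exp L` at `0`, does the job.
-/

open Set Filter Topology Real

/-- `Q(u) = 3 (1 - (1-u)^{1/3})/u`, extended by `Q(0) = 1`. -/
noncomputable def Qfun (u : ℝ) : ℝ :=
  if u = 0 then 1 else 3 * (1 - (1 - u) ^ ((1:ℝ)/3)) / u

open Function

section MonotoneLimit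

variable {f f' : ℝ → ℝ} {a b M : ℝ}

theorem antitoneOn_Ioo_of_hasDerivAt_nonpos (hf : ∀ x ∈ Ioo a b, HasDerivAt f (f' x) x)
    (hf' : ∀ x ∈ Ioo a b, f' x ≤ 0) : AntitoneOn f (Ioo a b) :=
  antitoneOn_of_hasDerivWithinAt_nonpos (convex_Ioo a b)
    (fun x hx ↦ (hf x hx).continuousAt.continuousWithinAt)
    (by simpa only [interior_Ioo] using fun x hx ↦ (hf x hx).hasDerivWithinAt)
    (by simpa only [interior_Ioo] using hf')

theorem monotoneOn_Ioo_of_hasDerivAt_nonneg (hf : ∀ x ∈ Ioo a b, HasDerivAt f (f' x) x)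
    (hf' : ∀ x ∈ Ioo a b, 0 ≤ f' x) : MonotoneOn f (Ioo a b) :=
  monotoneOn_of_hasDerivWithinAt_nonneg (convex_Ioo a b)
    (fun x hx ↦ (hf x hx).continuousAt.continuousWithinAt)
    (by simpa only [interior_Ioo] using fun x hx ↦ (hf x hx).hasDerivWithinAt)
    (by simpa only [interior_Ioo] using hf')

theorem bddAbove_image_Ioo_of_hasDerivAt_mem_Icc (hab : a < b)
    (hf : ∀ x ∈ Ioo a b, HasDerivAt f (f' x) x) (hf' : ∀ x ∈ Ioo a b, f' x ∈ Icc (-M) 0) :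
    BddAbove (f '' Ioo a b) := by
  obtain ⟨c, hc⟩ : ∃ c, c ∈ Ioo a b := nonempty_Ioo.2 hab
  have hM : 0 ≤ M := by linarith [(hf' c hc).1, (hf' c hc).2]
  have hanti := antitoneOn_Ioo_of_hasDerivAt_nonpos hf fun x hx ↦ (hf' x hx).2
  have hmono : MonotoneOn (fun x ↦ f x + M * x) (Ioo a b) :=
    monotoneOn_Ioo_of_hasDerivAt_nonneg
      (fun x hx ↦ (hf x hx).add (by simpa using (hasDerivAt_id x).const_mul M))
      fun x hx ↦ by linarith [(hf' x hx).1]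
  refine ⟨f c + M * (c - a), ?_⟩
  rintro _ ⟨x, hx, rfl⟩
  rcases le_total x c with hxc | hcx
  · nlinarith [hmono hx hc hxc, hx.1]
  · nlinarith [hanti hc hx hcx, mul_nonneg hM (sub_nonneg.2 hc.1.le)]

theorem exists_tendsto_nhdsGT_of_hasDerivAt_mem_Icc (hab : a < b)
    (hf : ∀ x ∈ Ioo a b, HasDerivAt f (f' x) x) (hf' : ∀ x ∈ Ioo a b, f' x ∈ Icc (-M) 0) :
    AntitoneOn f (Ioo a b) ∧ ∃ L, Tendsto f (𝓝[>] a) (𝓝 L) ∧ ∀ x ∈ Ioo a b, f x ≤ L := by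
  have hanti := antitoneOn_Ioo_of_hasDerivAt_nonpos hf fun x hx ↦ (hf' x hx).2
  have hbdd := bddAbove_image_Ioo_of_hasDerivAt_mem_Icc hab hf hf'
  exact ⟨hanti, _, hanti.tendsto_nhdsWithin_Ioo_right (nonempty_Ioo.2 hab) hbdd,
    fun x hx ↦ le_csSup hbdd (mem_image_of_mem f hx)⟩

end MonotoneLimit

theorem AntitoneOn.update_Ico {α β : Type*} [LinearOrder α] [Preorder β] {g : α → β} {a b : α}
    {l : β} (hg : AntitoneOn g (Ioo a b)) (hl : ∀ x ∈ Ioo a b, g x ≤ l) :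
    AntitoneOn (update g a l) (Ico a b) := by
  intro x hx y hy hxy
  rcases hx.1.eq_or_lt with rfl | hax
  · rcases hy.1.eq_or_lt with rfl | hay
    · exact le_rfl
    · simpa [update_self, update_of_ne hay.ne'] using hl y ⟨hay, hy.2⟩
  · have hay := hax.trans_le hxy
    simpa [update_of_ne hax.ne', update_of_ne hay.ne'] using hg ⟨hax, hx.2⟩ ⟨hay, hy.2⟩ hxy

theorem Qfun_one_sub_pow_three {a : ℝ} (ha0 : 0 ≤ a) (ha1 : a < 1) :
    Qfun (1 - a ^ 3) = 3 / (1 + a + a ^ 2) := by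
  have hu : 0 < 1 - a ^ 3 := sub_pos.2 (pow_lt_one₀ ha0 ha1 three_ne_zero)
  have hcbrt : (a ^ 3) ^ ((1 : ℝ) / 3) = a := by
    simpa using pow_rpow_inv_natCast ha0 three_ne_zero
  rw [Qfun, if_neg hu.ne', sub_sub_cancel, hcbrt, div_eq_div_iff hu.ne' (by positivity)]
  ring

theorem Qfun_mem_Icc {u : ℝ} (h0 : 0 < u) (h1 : u ≤ 1) : Qfun u ∈ Icc 1 (1 + 2 * u) := by
  obtain ⟨a, ha0, ha1, rfl⟩ : ∃ a, 0 ≤ a ∧ a < 1 ∧ u = 1 - a ^ 3 := by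
    refine ⟨(1 - u) ^ ((1 : ℝ) / 3), rpow_nonneg (by linarith) _,
      rpow_lt_one (by linarith) (by linarith) (by norm_num), ?_⟩
    have := rpow_inv_natCast_pow (n := 3) (by linarith : 0 ≤ 1 - u) three_ne_zero
    norm_num at this ⊢
    linarith
  rw [Qfun_one_sub_pow_three ha0 ha1]
  have hs : 0 < 1 + a + a ^ 2 := by positivity
  have ha3 : a ^ 3 ≤ a ^ 2 := pow_le_pow_of_le_one ha0 ha1.le (by norm_num)
  have ha4 : a ^ 4 ≤ a ^ 2 := pow_le_pow_of_le_one ha0 ha1.le (by norm_num)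
  constructor
  · rw [le_div_iff₀ hs]
    nlinarith
  · rw [div_le_iff₀ hs]
    nlinarith [mul_nonneg ha0 (mul_nonneg (sub_nonneg.2 ha1.le) (by linarith : (0:ℝ) ≤ 1 + 2 * a)),
      mul_nonneg ha0 (sub_nonneg.2 ha3), mul_nonneg ha0 (sub_nonneg.2 ha4)]

theorem one_div_mul_sub_mem_Icc {κ Q u c : ℝ} (hκ : 1 < κ) (hu : 0 < u)
    (hQ : Q ∈ Icc 1 (1 + c * u)) :
    1 / (u * (κ * Q - 1)) - 1 / (κ - 1) * u⁻¹ ∈ Icc (-(c * κ / (κ - 1) ^ 2)) 0 := by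
  have hκ1 : 0 < κ - 1 := by linarith
  have hden : κ - 1 ≤ κ * Q - 1 := by nlinarith [hQ.1]
  have hq0 : 0 ≤ (Q - 1) / u := div_nonneg (by linarith [hQ.1]) hu.le
  have hqc : (Q - 1) / u ≤ c := by rw [div_le_iff₀ hu]; linarith [hQ.2]
  have hkey : 1 / (u * (κ * Q - 1)) - 1 / (κ - 1) * u⁻¹
      = -(κ / (κ - 1)) * ((Q - 1) / u / (κ * Q - 1)) := by
    field_simp [(hκ1.trans_le hden).ne']
    ring
  have hr0 : 0 ≤ (Q - 1) / u / (κ * Q - 1) := div_nonneg hq0 (hκ1.le.trans hden)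
  have hrc : (Q - 1) / u / (κ * Q - 1) ≤ c / (κ - 1) :=
    div_le_div₀ (hq0.trans hqc) hqc hκ1 hden
  rw [hkey]
  constructor
  · calc -(c * κ / (κ - 1) ^ 2) = -(κ / (κ - 1)) * (c / (κ - 1)) := by field_simp
      _ ≤ _ := mul_le_mul_of_nonpos_left hrc (neg_nonpos.2 (by positivity))
  · exact mul_nonpos_of_nonpos_of_nonneg (neg_nonpos.2 (by positivity)) hr0

theorem selfsimilar_profile_power_behavior
    (κ p : ℝ) (hκ : 1 < κ) (hp : p = 1 / (κ - 1))
    (Ψ : ℝ → ℝ) (hΨ_pos : ∀ u ∈ Set.Ioo (0:ℝ) 1, 0 < Ψ u)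
    (hΨ : ∀ u ∈ Set.Ioo (0:ℝ) 1,
      HasDerivAt (fun w => Real.log (Ψ w)) (1 / (u * (κ * Qfun u - 1))) u) :
    ∃ α : ℝ → ℝ,
      (∀ u ∈ Set.Ioo (0:ℝ) 1, Ψ u = α u * u ^ p) ∧
      AntitoneOn α (Set.Ico 0 1) ∧
      ContinuousWithinAt α (Set.Ici 0) 0 ∧
      0 < α 0 ∧
      Tendsto (fun u => Ψ u / u ^ p) (𝓝[>] (0:ℝ)) (𝓝 (α 0)) := by
  set h : ℝ → ℝ := fun u ↦ log (Ψ u) - p * log u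
  have hderiv : ∀ u ∈ Ioo (0 : ℝ) 1,
      HasDerivAt h (1 / (u * (κ * Qfun u - 1)) - p * u⁻¹) u := fun u hu ↦
    (hΨ u hu).sub ((hasDerivAt_log hu.1.ne').const_mul p)
  obtain ⟨hanti, L, hL, hle⟩ := exists_tendsto_nhdsGT_of_hasDerivAt_mem_Icc zero_lt_one hderiv
    fun u hu ↦ hp ▸ one_div_mul_sub_mem_Icc hκ hu.1 (Qfun_mem_Icc hu.1 hu.2.le)
  have hexp : EqOn (fun u ↦ Ψ u / u ^ p) (exp ∘ h) (Ioo 0 1) := fun u hu ↦ by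
    simp only [h, comp_apply, exp_sub, exp_log (hΨ_pos u hu), rpow_def_of_pos hu.1, mul_comm p]
  have hlim : Tendsto (fun u ↦ Ψ u / u ^ p) (𝓝[>] 0) (𝓝 (exp L)) :=
    ((continuous_exp.tendsto L).comp hL).congr'
      (eventuallyEq_of_mem (Ioo_mem_nhdsGT zero_lt_one) hexp.symm)
  refine ⟨update (fun u ↦ Ψ u / u ^ p) 0 (exp L), fun u hu ↦ ?_, ?_, ?_, ?_, ?_⟩
  · rw [update_of_ne hu.1.ne', div_mul_cancel₀ _ (rpow_pos_of_pos hu.1 p).ne']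
  · exact AntitoneOn.update_Ico ((exp_monotone.comp_antitoneOn hanti).congr hexp.symm)
      fun u hu ↦ (hexp hu).trans_le (exp_le_exp.2 (hle u hu))
  · rwa [continuousWithinAt_update_same, Ici_sdiff_left]
  · simpa only [update_self] using exp_pos L
  · rwa [update_self]
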